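/- arXiv:2303.02021 — 2 statements merged into one kernel-verified Lean document; each statement's English description precedes it below -/
import Mathlib

section
/- Let P_l denote the l-th Legendre polynomial, defined by Rodrigues' formula P_l(x) = (1/(2^l · l!)) · (d/dx)^l (x^2 − 1)^l, and let P_l'' denote its second derivative. For every real number x with |x| < 1, the series Σ_{l=2}^∞ (2·(2l+1)·(l−2)!/(l+2)!) · P_l''(x) converges and its sum equals 1/(1 − x). -/
open Polynomial

/-- The `l`-th Legendre polynomial, via Rodrigues' formula. -/
noncomputable def legendre (l : ℕ) : Polynomial ℝ :=
  ((1 : ℝ) / (2 ^ l * l.factorial)) • ((⇑(derivative (R := ℝ)))^[l] ((X ^ 2 - 1) ^ l))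

namespace Leg

lemma iter_add (n : ℕ) (p q : ℝ[X]) :
    (⇑(derivative (R := ℝ)))^[n] (p + q)
      = (⇑(derivative (R := ℝ)))^[n] p + (⇑(derivative (R := ℝ)))^[n] q := by
  induction n generalizing p q with
  | zero => simp
  | succ n ih => rw [Function.iterate_succ_apply, Function.iterate_succ_apply,
      Function.iterate_succ_apply, derivative_add, ih]

/-- Leibniz for X * p. -/
lemma L1 (n : ℕ) (p : ℝ[X]) :
    (⇑(derivative (R := ℝ)))^[n+1] (X * p)
      = X * (⇑(derivative (R := ℝ)))^[n+1] p + ((n:ℝ[X])+1) * (⇑(derivative (R := ℝ)))^[n] p := by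
  induction n generalizing p with
  | zero => simp [derivative_mul]; ring
  | succ n ih =>
    have hd : derivative (X * p) = X * derivative p + p := by
      simp [derivative_mul]; ring
    rw [Function.iterate_succ_apply, hd, iter_add, ih (derivative p),
      ← Function.iterate_succ_apply, ← Function.iterate_succ_apply,
      Function.iterate_succ_apply' _ (n+1) p]
    push_cast
    ring

noncomputable def Rp (l : ℕ) : ℝ[X] := (⇑(derivative (R := ℝ)))^[l] ((X ^ 2 - 1) ^ l)

lemma Rp_zero : Rp 0 = 1 := by simp [Rp]

lemma D_Rp (l : ℕ) :
    (⇑(derivative (R := ℝ)))^[l+1] ((X ^ 2 - 1) ^ l) = derivative (Rp l) := by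
  rw [Rp, Function.iterate_succ_apply']

lemma DV_succ (l : ℕ) :
    derivative (((X:ℝ[X]) ^ 2 - 1) ^ (l+1)) = (2*(l:ℝ[X])+2) * (X * ((X ^ 2 - 1) ^ l)) := by
  rw [derivative_pow]
  simp only [Nat.add_sub_cancel, derivative_sub, derivative_one, derivative_X_pow,
    map_add, map_one, C_eq_natCast, map_ofNat]
  push_cast
  ring

lemma iter_C_mul (n : ℕ) (a : ℝ[X]) (ha : derivative a = 0) (p : ℝ[X]) :
    (⇑(derivative (R := ℝ)))^[n] (a * p) = a * (⇑(derivative (R := ℝ)))^[n] p := by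
  induction n generalizing p with
  | zero => simp
  | succ n ih => rw [Function.iterate_succ_apply, derivative_mul, ha, zero_mul, zero_add, ih, ← Function.iterate_succ_apply]

/-- identity (A) at R level -/
lemma A_R (l : ℕ) :
    derivative (Rp (l+1)) = (2*(l:ℝ[X])+2) * (X * derivative (Rp l) + ((l:ℝ[X])+1) * Rp l) := by
  have : derivative (Rp (l+1))
      = (⇑(derivative (R := ℝ)))^[l+1] (derivative (((X:ℝ[X]) ^ 2 - 1) ^ (l+1))) := by
    rw [Rp, ← Function.iterate_succ_apply' (⇑(derivative (R := ℝ))) (l+1),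
      Function.iterate_succ_apply]
  rw [this, DV_succ, iter_C_mul _ _ (by simp), L1, D_Rp, ← Rp]

end Leg

namespace Leg

lemma iter_sub (n : ℕ) (p q : ℝ[X]) :
    (⇑(derivative (R := ℝ)))^[n] (p - q)
      = (⇑(derivative (R := ℝ)))^[n] p - (⇑(derivative (R := ℝ)))^[n] q := by
  induction n generalizing p q with
  | zero => simp
  | succ n ih => rw [Function.iterate_succ_apply, Function.iterate_succ_apply,
      Function.iterate_succ_apply, derivative_sub, ih]

/-- identity (D) at R level -/
lemma Dn_R (l : ℕ) :
    Rp (l+1) = (2*(l:ℝ[X])+2) * (X * Rp l) + 2 * ((X^2-1) * derivative (Rp l)) := by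
  cases l with
  | zero =>
    have : Rp 1 = derivative ((X:ℝ[X])^2 - 1) := by
      simp [Rp]
    rw [this, Rp_zero]
    simp [map_ofNat]
    norm_num
  | succ k =>
    set D := (⇑(derivative (R := ℝ)))
    set V := ((X:ℝ[X])^2-1)^(k+1) with hVdef
    set W := D^[k] V with hWdef
    have hRp1 : D^[k + 1] V = Rp (k+1) := rfl
    have hRp1' : D^[k + 2] V = derivative (Rp (k+1)) := D_Rp (k+1)
    have hidx : k + 1 + 1 = k + 2 := rfl
    have f1 : Rp (k+2) = (2*((k:ℝ[X])+1)+2) * (X * Rp (k+1) + ((k:ℝ[X])+1) * W) := by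
      have hdv := DV_succ (k+1)
      rw [hidx] at hdv
      push_cast at hdv
      have h1 : Rp (k+2) = D^[k+1] (derivative (((X:ℝ[X])^2-1)^(k+2))) := by
        rw [Rp, Function.iterate_succ_apply]
      rw [h1, hdv, iter_C_mul _ _ (by simp), L1, hRp1]
    have f2 : Rp (k+2) = X * (X * derivative (Rp (k+1)) + ((k:ℝ[X])+2) * Rp (k+1))
        + ((k:ℝ[X])+2) * (X * Rp (k+1) + ((k:ℝ[X])+1) * W) - derivative (Rp (k+1)) := by
      have hV2 : ((X:ℝ[X])^2-1)^(k+2) = X*(X*V) - V := by rw [hVdef]; ring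
      have h1 : Rp (k+2) = D^[k+2] (X*(X*V)) - D^[k+2] V := by
        rw [Rp, hV2, iter_sub]
      have e1 := L1 (k+1) (X*V)
      rw [hidx] at e1
      have e2 := L1 k V
      have e3 := L1 (k+1) V
      rw [hidx] at e3
      rw [h1, e1, e2, e3, hidx, hRp1, hRp1', ← hWdef]
      push_cast
      ring
    have hW : (2*((k:ℝ[X])+1)*((k:ℝ[X])+2)) * W = 2*((X^2-1) * derivative (Rp (k+1))) := by
      linear_combination 2*(f2 - f1)
    have hg : Rp (k+1+1) = (2*(((k:ℕ):ℝ[X])+1)+2) * (X * Rp (k+1))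
        + 2 * ((X^2-1) * derivative (Rp (k+1))) := by
      rw [hidx]
      linear_combination f1 + hW
    push_cast at hg ⊢
    exact hg

end Leg

namespace Leg

lemma C'_R (l : ℕ) :
    X * derivative (Rp (l+1))
      = (2*(l:ℝ[X])+2) * derivative (Rp l) + ((l:ℝ[X])+1) * Rp (l+1) := by
  linear_combination X * (A_R l) - ((l:ℝ[X])+1) * (Dn_R l)

lemma A'_R (l : ℕ) :
    derivative (derivative (Rp (l+1)))
      = (2*(l:ℝ[X])+2) * (X * derivative (derivative (Rp l)) + ((l:ℝ[X])+2) * derivative (Rp l)) := by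
  have h := congrArg derivative (A_R l)
  simp only [derivative_mul, derivative_add, derivative_X, derivative_natCast,
    derivative_ofNat, derivative_one] at h
  linear_combination h

lemma C''_R (l : ℕ) :
    X * derivative (derivative (Rp (l+1)))
      = (2*(l:ℝ[X])+2) * derivative (derivative (Rp l)) + (l:ℝ[X]) * derivative (Rp (l+1)) := by
  have h := congrArg derivative (C'_R l)
  simp only [derivative_mul, derivative_add, derivative_X, derivative_natCast,
    derivative_ofNat, derivative_one] at h
  linear_combination h

lemma ODE_R (l : ℕ) :
    2*((X:ℝ[X])^2-1) * derivative (derivative (Rp l)) + 4*X*derivative (Rp l)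
      = (2*(l:ℝ[X]))*((l:ℝ[X])+1) * Rp l := by
  have h := congrArg derivative (Dn_R l)
  simp only [derivative_mul, derivative_add, derivative_sub, derivative_X, derivative_natCast,
    derivative_ofNat, derivative_one, derivative_X_pow, C_eq_natCast] at h
  have h2 := A_R l
  push_cast at h
  linear_combination h2 - h

lemma star_R (m : ℕ) :
    2*((m:ℝ[X])+2)*(2*(m:ℝ[X])+3) * (X * derivative (derivative (Rp (m+1))))
      = (m:ℝ[X]) * derivative (derivative (Rp (m+2)))
        + 4*((m:ℝ[X])+1)*((m:ℝ[X])+2)*((m:ℝ[X])+3) * derivative (derivative (Rp m)) := by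
  have hA := A'_R (m+1)
  push_cast at hA
  have hC := C''_R m
  linear_combination -(m:ℝ[X]) * hA + 2*((m:ℝ[X])+2)*((m:ℝ[X])+3) * hC

end Leg

namespace Leg

noncomputable def av (l : ℕ) : ℝ := 2^l * l.factorial

lemma av_pos (l : ℕ) : 0 < av l := by
  have := l.factorial_pos
  unfold av
  positivity

lemma av_succ (l : ℕ) : av (l+1) = (2*(l:ℝ)+2) * av l := by
  unfold av
  rw [pow_succ, Nat.factorial_succ]
  push_cast
  ring

lemma tr (l : ℕ) : Rp l = (av l) • legendre l := by
  have ha : ((2:ℝ)^l * l.factorial) ≠ 0 := by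
    have := l.factorial_pos
    positivity
  rw [legendre, smul_smul]
  unfold av
  rw [mul_one_div, div_self ha, one_smul]
  rfl

/-- real-level abbreviations -/
noncomputable def p (l : ℕ) (x : ℝ) : ℝ := (legendre l).eval x
noncomputable def dp (l : ℕ) (x : ℝ) : ℝ := (derivative (legendre l)).eval x
noncomputable def d2p (l : ℕ) (x : ℝ) : ℝ := (derivative (derivative (legendre l))).eval x

lemma evalRp (l : ℕ) (x : ℝ) : (Rp l).eval x = av l * p l x := by
  rw [tr l]; simp [p]

lemma evalDRp (l : ℕ) (x : ℝ) : (derivative (Rp l)).eval x = av l * dp l x := by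
  rw [tr l, derivative_smul]; simp [dp]

lemma evalD2Rp (l : ℕ) (x : ℝ) :
    (derivative (derivative (Rp l))).eval x = av l * d2p l x := by
  rw [tr l, derivative_smul, derivative_smul]; simp [d2p]

lemma E1 (l : ℕ) (x : ℝ) : dp (l+1) x = x * dp l x + ((l:ℝ)+1) * p l x := by
  have h := congrArg (eval x) (A_R l)
  simp only [eval_mul, eval_add, eval_natCast, eval_X, eval_ofNat, eval_one,
    evalRp, evalDRp, av_succ] at h
  have hne : ((2*(l:ℝ)+2) * av l) ≠ 0 := (mul_pos (by positivity) (av_pos l)).ne'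
  refine mul_left_cancel₀ hne ?_
  linear_combination h

lemma E2 (l : ℕ) (x : ℝ) :
    ((l:ℝ)+1) * p (l+1) x = ((l:ℝ)+1) * x * p l x + (x^2-1) * dp l x := by
  have h := congrArg (eval x) (Dn_R l)
  simp only [eval_mul, eval_add, eval_sub, eval_pow, eval_natCast, eval_X, eval_ofNat,
    eval_one, evalRp, evalDRp, av_succ] at h
  have hne : ((2:ℝ) * av l) ≠ 0 := (mul_pos two_pos (av_pos l)).ne'
  refine mul_left_cancel₀ hne ?_
  linear_combination h

lemma E3 (l : ℕ) (x : ℝ) :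
    (x^2-1) * d2p l x + 2*x*dp l x = (l:ℝ)*((l:ℝ)+1) * p l x := by
  have h := congrArg (eval x) (ODE_R l)
  simp only [eval_mul, eval_add, eval_sub, eval_pow, eval_natCast, eval_X, eval_ofNat,
    eval_one, evalRp, evalDRp, evalD2Rp] at h
  have hne : ((2:ℝ) * av l) ≠ 0 := (mul_pos two_pos (av_pos l)).ne'
  refine mul_left_cancel₀ hne ?_
  linear_combination h

lemma E4 (m : ℕ) (x : ℝ) :
    (2*(m:ℝ)+3) * x * d2p (m+1) x = (m:ℝ) * d2p (m+2) x + ((m:ℝ)+3) * d2p m x := by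
  have h := congrArg (eval x) (star_R m)
  simp only [eval_mul, eval_add, eval_natCast, eval_X, eval_ofNat, eval_one,
    evalD2Rp, av_succ] at h
  push_cast at h
  have hne : ((2*(m:ℝ)+2)*(2*(m:ℝ)+4) * av m) ≠ 0 := by
    have := av_pos m
    positivity
  refine mul_left_cancel₀ hne ?_
  linear_combination h

end Leg

namespace Leg

lemma b0 : (Rp 0).eval 0 = 1 := by rw [Rp_zero]; simp

lemma d0 : (derivative (Rp 0)).eval 0 = 0 := by rw [Rp_zero]; simp

lemma dval (l : ℕ) :
    (derivative (Rp (l+1))).eval 0 = (2*(l:ℝ)+2)*((l:ℝ)+1) * (Rp l).eval 0 := by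
  have h := congrArg (eval 0) (A_R l)
  simp only [eval_mul, eval_add, eval_natCast, eval_X, eval_ofNat, eval_one] at h
  rw [h]; ring

lemma bval (l : ℕ) :
    (Rp (l+1)).eval 0 = -2 * (derivative (Rp l)).eval 0 := by
  have h := congrArg (eval 0) (Dn_R l)
  simp only [eval_mul, eval_add, eval_sub, eval_pow, eval_natCast, eval_X, eval_ofNat,
    eval_one] at h
  rw [h]; ring

lemma Qval (m : ℕ) :
    ((Rp (2*m)).eval 0)^2 ≤ (av (2*m))^2/(2*(m:ℝ)+1) ∧ (Rp (2*m+1)).eval 0 = 0 := by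
  induction m with
  | zero =>
    constructor
    · rw [show 2*0 = 0 from rfl, b0]
      have : av 0 = 1 := by simp [av]
      rw [this]; norm_num
    · rw [show 2*0+1 = 1 from rfl, bval 0, d0]; ring
  | succ k ih =>
    obtain ⟨ih1, ih2⟩ := ih
    have hb2 : (Rp (2*(k+1))).eval 0 = -4*(2*(k:ℝ)+1)^2 * (Rp (2*k)).eval 0 := by
      have h1 : 2*(k+1) = (2*k+1)+1 := by ring
      rw [h1, bval (2*k+1), dval (2*k)]
      push_cast
      ring
    have hav : av (2*(k+1)) = (4*(k:ℝ)+4)*(4*(k:ℝ)+2) * av (2*k) := by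
      have h1 : 2*(k+1) = (2*k+1)+1 := by ring
      rw [h1, av_succ (2*k+1), av_succ (2*k)]
      push_cast
      ring
    constructor
    · rw [hb2, hav]
      have hA := av_pos (2*k)
      have hk : (0:ℝ) ≤ (k:ℝ) := Nat.cast_nonneg k
      rw [le_div_iff₀ (show (0:ℝ) < 2*(k:ℝ)+1 by positivity)] at ih1
      push_cast
      rw [le_div_iff₀ (show (0:ℝ) < 2*((k:ℝ)+1)+1 by positivity)]
      have hpoly : 16*(2*(k:ℝ)+1)^3*(2*(k:ℝ)+3) ≤ 64*(2*(k:ℝ)+2)^2*(2*(k:ℝ)+1)^2 := by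
        nlinarith [hk]
      nlinarith [mul_le_mul_of_nonneg_left ih1
          (show (0:ℝ) ≤ 16*(2*(k:ℝ)+1)^3*(2*(k:ℝ)+3) by positivity),
        mul_le_mul_of_nonneg_right hpoly (sq_nonneg (av (2*k)))]
    · have h1 : 2*(k+1)+1 = (2*(k+1))+1 := rfl
      have h2 : 2*(k+1) = (2*k+1)+1 := by ring
      rw [h1, bval (2*(k+1)), h2, dval (2*k+1)]
      push_cast
      rw [ih2]
      ring

lemma val0 (l : ℕ) (hl : 1 ≤ l) :
    (l:ℝ)*((l:ℝ)+1) * ((Rp l).eval 0)^2 + ((derivative (Rp l)).eval 0)^2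
      ≤ ((l:ℝ)+1) * (av l)^2 := by
  rcases Nat.even_or_odd l with ⟨m, hm⟩ | ⟨m, hm⟩
  · -- l = 2m, m ≥ 1
    obtain ⟨k, hk⟩ : ∃ k, m = k + 1 := by
      rcases Nat.exists_eq_succ_of_ne_zero (by omega : m ≠ 0) with ⟨k, hk⟩
      exact ⟨k, hk⟩
    subst hk
    have hleq : l = 2*(k+1) := by omega
    subst hleq
    have hd : (derivative (Rp (2*(k+1)))).eval 0 = 0 := by
      have h2 : 2*(k+1) = (2*k+1)+1 := by ring
      rw [h2, dval (2*k+1), (Qval k).2]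
      ring
    have hb := (Qval (k+1)).1
    rw [hd]
    have hA := av_pos (2*(k+1))
    push_cast at hb ⊢
    rw [le_div_iff₀ (show (0:ℝ) < 2*((k:ℝ)+1)+1 by positivity)] at hb
    nlinarith [sq_nonneg (av (2*(k+1))), hb]
  · -- l = 2m+1
    have hleq : l = 2*m+1 := by omega
    subst hleq
    have hbz : (Rp (2*m+1)).eval 0 = 0 := (Qval m).2
    have hd : (derivative (Rp (2*m+1))).eval 0
        = (2*(2*(m:ℝ))+2)*((2*(m:ℝ))+1) * (Rp (2*m)).eval 0 := by
      have := dval (2*m)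
      push_cast at this ⊢
      exact this
    have hb := (Qval m).1
    have hA := av_pos (2*m)
    have havs : av (2*m+1) = (2*(2*(m:ℝ))+2) * av (2*m) := by
      have := av_succ (2*m)
      push_cast at this ⊢
      exact this
    rw [hbz, hd, havs]
    rw [le_div_iff₀ (show (0:ℝ) < 2*(m:ℝ)+1 by positivity)] at hb
    push_cast
    nlinarith [mul_le_mul_of_nonneg_left hb
        (show (0:ℝ) ≤ (2*(2*(m:ℝ))+2)^2*(2*(m:ℝ)+1) by positivity),
      sq_nonneg (av (2*m))]

end Leg

namespace Leg

noncomputable def HP (l : ℕ) : ℝ[X] :=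
  ((l:ℝ[X])*((l:ℝ[X])+1)) * ((1 - X^2) * (Rp l)^2) + (1-X^2)^2 * (derivative (Rp l))^2

lemma dHP (l : ℕ) :
    derivative (HP l) = -(2*(l:ℝ[X])*((l:ℝ[X])+1)) * (X * (Rp l)^2) := by
  unfold HP
  simp only [derivative_mul, derivative_add, derivative_sub, derivative_pow, derivative_X,
    derivative_one, derivative_natCast, C_eq_natCast, map_ofNat, pow_one, derivative_X_pow]
  norm_num
  linear_combination (((X:ℝ[X])^2 - 1) * derivative (Rp l)) * ODE_R l

lemma Hb (l : ℕ) (hl : 1 ≤ l) (x : ℝ) (hx : |x| < 1) :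
    (1-x^2) * (p l x)^2 ≤ 1/(l:ℝ) := by
  obtain ⟨hx1, hx2⟩ := abs_lt.mp hx
  have hs : 0 < 1 - x^2 := by nlinarith
  have hlpos : (0:ℝ) < (l:ℝ) := by exact_mod_cast hl
  set f : ℝ → ℝ := fun y => (HP l).eval y with hf
  have hderiv : ∀ y : ℝ, deriv f y = -(2*(l:ℝ)*((l:ℝ)+1)) * (y * ((Rp l).eval y)^2) := by
    intro y
    rw [hf]
    rw [Polynomial.deriv, dHP]
    simp [eval_mul, eval_neg, eval_add, eval_pow, eval_natCast, eval_X, eval_ofNat]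
  have hcont : Continuous f := (HP l).continuous
  have hdiff : Differentiable ℝ f := (HP l).differentiable
  have h1 : AntitoneOn f (Set.Ici 0) := by
    apply antitoneOn_of_deriv_nonpos (convex_Ici 0) hcont.continuousOn
      hdiff.differentiableOn
    intro y hy
    rw [interior_Ici] at hy
    have hy0 : (0:ℝ) < y := hy
    rw [hderiv]
    have h0 : (0:ℝ) ≤ (l:ℝ) := Nat.cast_nonneg l
    nlinarith [sq_nonneg ((Rp l).eval y),
      mul_nonneg (mul_nonneg (mul_nonneg (show (0:ℝ) ≤ 2 by norm_num) h0)
        (show (0:ℝ) ≤ (l:ℝ)+1 by linarith)) (mul_nonneg hy0.le (sq_nonneg ((Rp l).eval y)))]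
  have h2 : MonotoneOn f (Set.Iic 0) := by
    apply monotoneOn_of_deriv_nonneg (convex_Iic 0) hcont.continuousOn
      hdiff.differentiableOn
    intro y hy
    rw [interior_Iic] at hy
    have hy0 : y < 0 := hy
    rw [hderiv]
    have h0 : (0:ℝ) ≤ (l:ℝ) := Nat.cast_nonneg l
    nlinarith [mul_nonneg (mul_nonneg (mul_nonneg (show (0:ℝ) ≤ 2 by norm_num) h0)
        (show (0:ℝ) ≤ (l:ℝ)+1 by linarith))
      (mul_nonneg (show (0:ℝ) ≤ -y by linarith) (sq_nonneg ((Rp l).eval y)))]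
  have hle : f x ≤ f 0 := by
    rcases le_total 0 x with h | h
    · exact h1 Set.self_mem_Ici (Set.mem_Ici.2 h) h
    · exact h2 (Set.mem_Iic.2 h) Set.self_mem_Iic h
  have hfx : f x = (l:ℝ)*((l:ℝ)+1) * ((1-x^2) * ((Rp l).eval x)^2)
      + (1-x^2)^2 * ((derivative (Rp l)).eval x)^2 := by
    simp only [hf, HP, eval_mul, eval_add, eval_sub, eval_pow, eval_one, eval_X, eval_natCast]
  have hf0 : f 0 = (l:ℝ)*((l:ℝ)+1) * ((Rp l).eval 0)^2 + ((derivative (Rp l)).eval 0)^2 := by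
    simp only [hf, HP, eval_mul, eval_add, eval_sub, eval_pow, eval_one, eval_X, eval_natCast]
    norm_num
  have hval := val0 l hl
  have hRx := evalRp l x
  have hA := av_pos l
  have big : (l:ℝ)*((l:ℝ)+1)*((1-x^2)*(p l x)^2) * (av l)^2 ≤ ((l:ℝ)+1) * (av l)^2 := by
    have e1 : (l:ℝ)*((l:ℝ)+1)*((1-x^2)*(p l x)^2) * (av l)^2
        = (l:ℝ)*((l:ℝ)+1) * ((1-x^2) * ((Rp l).eval x)^2) := by
      rw [hRx]; ring
    rw [e1]
    have e2 : (l:ℝ)*((l:ℝ)+1) * ((1-x^2) * ((Rp l).eval x)^2) ≤ f x := by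
      rw [hfx]
      nlinarith [mul_nonneg (sq_nonneg (1-x^2)) (sq_nonneg ((derivative (Rp l)).eval x))]
    calc (l:ℝ)*((l:ℝ)+1) * ((1-x^2) * ((Rp l).eval x)^2) ≤ f x := e2
      _ ≤ f 0 := hle
      _ ≤ ((l:ℝ)+1) * (av l)^2 := by rw [hf0]; exact hval
  rw [le_div_iff₀ hlpos]
  have hpos : (0:ℝ) < ((l:ℝ)+1) * (av l)^2 := by positivity
  have := le_of_mul_le_mul_right (by
    calc ((1-x^2) * (p l x)^2 * (l:ℝ)) * (((l:ℝ)+1) * (av l)^2)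
        = (l:ℝ)*((l:ℝ)+1)*((1-x^2)*(p l x)^2) * (av l)^2 := by ring
      _ ≤ ((l:ℝ)+1) * (av l)^2 := big
      _ = 1 * (((l:ℝ)+1) * (av l)^2) := by ring) hpos
  exact this

end Leg

namespace Leg

lemma pb (l : ℕ) (hl : 1 ≤ l) (x : ℝ) (hx : |x| < 1) :
    Real.sqrt ((l:ℝ)*(1-x^2)) * |p l x| ≤ 1 := by
  obtain ⟨hx1, hx2⟩ := abs_lt.mp hx
  have hs : 0 < 1-x^2 := by nlinarith
  have hlpos : (0:ℝ) < (l:ℝ) := by exact_mod_cast hl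
  have h := Hb l hl x hx
  rw [le_div_iff₀ hlpos] at h
  have h2 : ((l:ℝ)*(1-x^2)) * (p l x)^2 ≤ 1 := by nlinarith
  have e : Real.sqrt (((l:ℝ)*(1-x^2)) * (p l x)^2)
      = Real.sqrt ((l:ℝ)*(1-x^2)) * |p l x| := by
    rw [Real.sqrt_mul (by positivity : (0:ℝ) ≤ (l:ℝ)*(1-x^2)), Real.sqrt_sq_eq_abs]
  calc Real.sqrt ((l:ℝ)*(1-x^2)) * |p l x|
      = Real.sqrt (((l:ℝ)*(1-x^2)) * (p l x)^2) := e.symm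
    _ ≤ Real.sqrt 1 := Real.sqrt_le_sqrt h2
    _ = 1 := Real.sqrt_one

lemma d2p_sharp (l : ℕ) (hl : 1 ≤ l) (x : ℝ) (hx : |x| < 1) :
    Real.sqrt ((l:ℝ)*(1-x^2)) * (1-x^2)^2 * |d2p l x|
      ≤ ((l:ℝ)+1)*((l:ℝ)+4) := by
  obtain ⟨hx1, hx2⟩ := abs_lt.mp hx
  have hs : 0 < 1-x^2 := by nlinarith
  have hs1 : 1-x^2 ≤ 1 := by nlinarith
  set W := Real.sqrt ((l:ℝ)*(1-x^2)) with hWdef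
  have hW0 : 0 ≤ W := Real.sqrt_nonneg _
  have hWle : W ≤ Real.sqrt (((l:ℝ)+1)*(1-x^2)) := by
    apply Real.sqrt_le_sqrt
    nlinarith
  -- A1, A2
  have hA1 : W * |p l x| ≤ 1 := pb l hl x hx
  have hA2 : W * |p (l+1) x| ≤ 1 := by
    have := pb (l+1) (by omega) x hx
    push_cast at this
    calc W * |p (l+1) x| ≤ Real.sqrt (((l:ℝ)+1)*(1-x^2)) * |p (l+1) x| :=
          mul_le_mul_of_nonneg_right hWle (abs_nonneg _)
      _ ≤ 1 := this
  -- A3 : s * |dp l x| ≤ (l+1) * (|p l x| + |p (l+1) x|)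
  have hdpeq : (1-x^2) * dp l x = ((l:ℝ)+1)*(x * p l x) - ((l:ℝ)+1)*p (l+1) x := by
    linear_combination E2 l x
  have hxp : |x * p l x| ≤ |p l x| := by
    rw [abs_mul]
    exact mul_le_of_le_one_left (abs_nonneg _) hx.le
  have hA3 : (1-x^2) * |dp l x| ≤ ((l:ℝ)+1) * (|p l x| + |p (l+1) x|) := by
    have e1 : (1-x^2) * |dp l x| = |(1-x^2) * dp l x| := by
      rw [abs_mul, abs_of_pos hs]
    rw [e1, hdpeq]
    have t1 : |((l:ℝ)+1)*(x * p l x) - ((l:ℝ)+1)*p (l+1) x|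
        ≤ |((l:ℝ)+1)*(x * p l x)| + |((l:ℝ)+1)*p (l+1) x| := abs_sub _ _
    have hl0 : (0:ℝ) ≤ (l:ℝ)+1 := by positivity
    have u1 : |((l:ℝ)+1)*(x * p l x)| ≤ ((l:ℝ)+1) * |p l x| := by
      rw [abs_mul, abs_of_nonneg hl0]
      exact mul_le_mul_of_nonneg_left hxp hl0
    have u2 : |((l:ℝ)+1)*p (l+1) x| = ((l:ℝ)+1) * |p (l+1) x| := by
      rw [abs_mul, abs_of_nonneg hl0]
    rw [u2] at t1
    linarith
  -- A4 : s * |d2p l x| ≤ 2 * |dp l x| + l(l+1) |p l x|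
  have hd2eq : (1-x^2) * d2p l x = 2*x*dp l x - (l:ℝ)*((l:ℝ)+1)*p l x := by
    linear_combination - E3 l x
  have hA4 : (1-x^2) * |d2p l x| ≤ 2 * |dp l x| + (l:ℝ)*((l:ℝ)+1) * |p l x| := by
    have e1 : (1-x^2) * |d2p l x| = |(1-x^2) * d2p l x| := by
      rw [abs_mul, abs_of_pos hs]
    rw [e1, hd2eq]
    have t1 : |2*x*dp l x - (l:ℝ)*((l:ℝ)+1)*p l x|
        ≤ |2*x*dp l x| + |(l:ℝ)*((l:ℝ)+1)*p l x| := abs_sub _ _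
    have hl0 : (0:ℝ) ≤ (l:ℝ)*((l:ℝ)+1) := by positivity
    have h2x : |2*x*dp l x| ≤ 2 * |dp l x| := by
      rw [show (2:ℝ)*x*dp l x = (2*x)*dp l x by ring, abs_mul]
      have hh : |2*x| ≤ 2 := by
        rw [abs_mul, abs_two]
        nlinarith [abs_nonneg x, hx]
      nlinarith [abs_nonneg (dp l x)]
    have u3 : |(l:ℝ)*((l:ℝ)+1)*p l x| = (l:ℝ)*((l:ℝ)+1) * |p l x| := by
      rw [abs_mul, abs_of_nonneg hl0]
    rw [u3] at t1
    linarith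
  -- combine: W * s * |dp| ≤ 2(l+1)
  have hWs : W * ((1-x^2) * |dp l x|) ≤ 2*((l:ℝ)+1) := by
    calc W * ((1-x^2) * |dp l x|) ≤ W * (((l:ℝ)+1) * (|p l x| + |p (l+1) x|)) :=
          mul_le_mul_of_nonneg_left hA3 hW0
      _ = ((l:ℝ)+1) * (W * |p l x| + W * |p (l+1) x|) := by ring
      _ ≤ ((l:ℝ)+1) * (1 + 1) := by
          apply mul_le_mul_of_nonneg_left _ (by positivity)
          linarith
      _ = 2*((l:ℝ)+1) := by ring
  -- final: W * s² * |d2p| ≤ (l+1)(l+4)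
  have final : W * (1-x^2)^2 * |d2p l x| ≤ ((l:ℝ)+1)*((l:ℝ)+4) := by
    have step : W * ((1-x^2) * ((1-x^2) * |d2p l x|))
        ≤ W * ((1-x^2) * (2 * |dp l x| + (l:ℝ)*((l:ℝ)+1) * |p l x|)) := by
      apply mul_le_mul_of_nonneg_left _ hW0
      exact mul_le_mul_of_nonneg_left hA4 hs.le
    have expand : W * ((1-x^2) * (2 * |dp l x| + (l:ℝ)*((l:ℝ)+1) * |p l x|))
        = 2 * (W * ((1-x^2) * |dp l x|)) + (l:ℝ)*((l:ℝ)+1) * (1-x^2) * (W * |p l x|) := by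
      ring
    have last : (l:ℝ)*((l:ℝ)+1) * (1-x^2) * (W * |p l x|) ≤ (l:ℝ)*((l:ℝ)+1) := by
      have h1 : (l:ℝ)*((l:ℝ)+1) * (1-x^2) * (W * |p l x|) ≤ (l:ℝ)*((l:ℝ)+1) * (1-x^2) * 1 :=
        mul_le_mul_of_nonneg_left hA1 (by positivity)
      nlinarith [mul_pos (mul_pos (show (0:ℝ) < (l:ℝ) by exact_mod_cast hl)
        (show (0:ℝ) < (l:ℝ)+1 by positivity)) hs]
    calc W * (1-x^2)^2 * |d2p l x| = W * ((1-x^2) * ((1-x^2) * |d2p l x|)) := by ring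
      _ ≤ 2 * (W * ((1-x^2) * |dp l x|)) + (l:ℝ)*((l:ℝ)+1) * (1-x^2) * (W * |p l x|) := by
          rw [← expand]; exact step
      _ ≤ 2 * (2*((l:ℝ)+1)) + (l:ℝ)*((l:ℝ)+1) := by linarith
      _ = ((l:ℝ)+1)*((l:ℝ)+4) := by ring
  exact final

end Leg

namespace Leg

lemma DDRp2 : derivative (derivative (Rp 2)) = 24 := by
  have h0 : Rp 2 = derivative (derivative (((X:ℝ[X])^2-1)^2)) := rfl
  rw [h0, show (((X:ℝ[X])^2-1)^2) = X^4 - 2*X^2 + 1 by ring]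
  simp [derivative_sub, derivative_add, derivative_mul, derivative_X_pow,
    derivative_ofNat, derivative_one, map_ofNat]
  norm_num

lemma DDRp3 : derivative (derivative (Rp 3)) = 720 * X := by
  have h0 : Rp 3 = derivative (derivative (derivative (((X:ℝ[X])^2-1)^3))) := rfl
  rw [h0, show (((X:ℝ[X])^2-1)^3) = X^6 - 3*X^4 + 3*X^2 - 1 by ring]
  simp [derivative_sub, derivative_add, derivative_mul, derivative_X_pow,
    derivative_ofNat, derivative_one, map_ofNat]
  ring

lemma av2 : av 2 = 8 := by norm_num [av, Nat.factorial]
lemma av3 : av 3 = 48 := by norm_num [av, Nat.factorial]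

lemma d2p2 (x : ℝ) : d2p 2 x = 3 := by
  have h := evalD2Rp 2 x
  rw [DDRp2, av2] at h
  simp at h
  linarith

lemma d2p3 (x : ℝ) : d2p 3 x = 15 * x := by
  have h := evalD2Rp 3 x
  rw [DDRp3, av3] at h
  simp at h
  linarith

/-- the series coefficient, reindexed -/
noncomputable def cr (n : ℕ) : ℝ :=
  2*(2*(n:ℝ)+5) / (((n:ℝ)+1)*((n:ℝ)+2)*((n:ℝ)+3)*((n:ℝ)+4))

lemma cr_nonneg (n : ℕ) : 0 ≤ cr n := by
  unfold cr
  positivity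

lemma crmul (n : ℕ) :
    (((n:ℝ)+1)*((n:ℝ)+2)*((n:ℝ)+3)*((n:ℝ)+4)) * cr n = 2*(2*(n:ℝ)+5) := by
  unfold cr
  field_simp

lemma keysum (x : ℝ) : ∀ n : ℕ,
    (((n:ℝ)+2)*((n:ℝ)+3)*((n:ℝ)+4))
        * ((1-x) * (∑ i ∈ Finset.range (n+1), cr i * d2p (i+2) x) - 1)
      = 2 * (d2p (n+2) x - d2p (n+3) x) := by
  intro n
  induction n with
  | zero =>
    norm_num [Finset.sum_range_one, d2p2, d2p3, cr]
    ring
  | succ n ih =>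
    rw [Finset.sum_range_succ]
    have hE := E4 (n+2) x
    push_cast at hE
    have hcr := crmul (n+1)
    push_cast at hcr
    have hne : ((n:ℝ)+2) ≠ 0 := by positivity
    apply mul_left_cancel₀ hne
    push_cast
    linear_combination ((n:ℝ)+5) * ih + ((1-x) * d2p (n+3) x) * hcr - 2 * hE

end Leg

namespace Leg

lemma sum_aux : Summable (fun n : ℕ => 1/(((n:ℝ)+1)*Real.sqrt ((n:ℝ)+1))) := by
  have h0 : Summable (fun n : ℕ => 1/((n:ℝ)^((3:ℝ)/2))) :=
    Real.summable_one_div_nat_rpow.mpr (by norm_num)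
  have h1 : Summable (fun n : ℕ => 1/(((n+1:ℕ):ℝ)^((3:ℝ)/2))) :=
    (summable_nat_add_iff 1).mpr h0
  apply h1.congr
  intro n
  have hpos : (0:ℝ) < (n:ℝ)+1 := by positivity
  push_cast
  rw [show (3:ℝ)/2 = 1 + 1/2 by norm_num, Real.rpow_add hpos, Real.rpow_one,
    ← Real.sqrt_eq_rpow]

lemma gbound (x : ℝ) (hx : |x| < 1) (n : ℕ) :
    |cr n * d2p (n+2) x|
      ≤ (50/(Real.sqrt (1-x^2) * (1-x^2)^2)) * (1/(((n:ℝ)+1)*Real.sqrt ((n:ℝ)+1))) := by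
  obtain ⟨hx1, hx2⟩ := abs_lt.mp hx
  have hs : 0 < 1-x^2 := by nlinarith
  have hsq : 0 < Real.sqrt (1-x^2) := Real.sqrt_pos.mpr hs
  have hn1 : (0:ℝ) < (n:ℝ)+1 := by positivity
  have hsqn : 0 < Real.sqrt ((n:ℝ)+1) := Real.sqrt_pos.mpr hn1
  have hd := d2p_sharp (n+2) (by omega) x hx
  push_cast at hd
  -- hd : √((n+2)(1-x²)) * (1-x²)² * |d2p (n+2) x| ≤ (n+3)*(n+6)
  have hW : 0 < Real.sqrt (((n:ℝ)+2)*(1-x^2)) := Real.sqrt_pos.mpr (by positivity)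
  rw [abs_mul, abs_of_nonneg (cr_nonneg n)]
  rw [mul_one_div, le_div_iff₀ (by positivity : (0:ℝ) < ((n:ℝ)+1)*Real.sqrt ((n:ℝ)+1))]
  rw [le_div_iff₀ (by positivity : (0:ℝ) < Real.sqrt (1-x^2) * (1-x^2)^2)]
  -- goal : cr n * |d2p| * ((n+1)*√(n+1)) * (√(1-x²)*(1-x²)²) ≤ 50
  have t1 : Real.sqrt ((n:ℝ)+1) * Real.sqrt (1-x^2) = Real.sqrt (((n:ℝ)+1)*(1-x^2)) :=
    (Real.sqrt_mul (by positivity) _).symm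
  have t2 : Real.sqrt (((n:ℝ)+1)*(1-x^2)) ≤ Real.sqrt (((n:ℝ)+2)*(1-x^2)) :=
    Real.sqrt_le_sqrt (by nlinarith)
  have habs : 0 ≤ |d2p (n+2) x| := abs_nonneg _
  have step1 : cr n * |d2p (n+2) x| * (((n:ℝ)+1)*Real.sqrt ((n:ℝ)+1))
        * (Real.sqrt (1-x^2)*(1-x^2)^2)
      = (cr n * ((n:ℝ)+1)) * ((Real.sqrt ((n:ℝ)+1) * Real.sqrt (1-x^2))
          * ((1-x^2)^2 * |d2p (n+2) x|)) := by ring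
  rw [step1, t1]
  have step2 : Real.sqrt (((n:ℝ)+1)*(1-x^2)) * ((1-x^2)^2 * |d2p (n+2) x|)
      ≤ ((n:ℝ)+3)*((n:ℝ)+6) := by
    calc Real.sqrt (((n:ℝ)+1)*(1-x^2)) * ((1-x^2)^2 * |d2p (n+2) x|)
        ≤ Real.sqrt (((n:ℝ)+2)*(1-x^2)) * ((1-x^2)^2 * |d2p (n+2) x|) := by
          apply mul_le_mul_of_nonneg_right t2 (by positivity)
      _ = Real.sqrt (((n:ℝ)+2)*(1-x^2)) * (1-x^2)^2 * |d2p (n+2) x| := by ring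
      _ ≤ ((n:ℝ)+3)*((n:ℝ)+6) := by nlinarith [hd]
  have hc1 : 0 ≤ cr n * ((n:ℝ)+1) := mul_nonneg (cr_nonneg n) (by positivity)
  calc (cr n * ((n:ℝ)+1)) * (Real.sqrt (((n:ℝ)+1)*(1-x^2)) * ((1-x^2)^2 * |d2p (n+2) x|))
      ≤ (cr n * ((n:ℝ)+1)) * (((n:ℝ)+3)*((n:ℝ)+6)) :=
        mul_le_mul_of_nonneg_left step2 hc1
    _ ≤ 50 := by
        unfold cr
        rw [div_mul_eq_mul_div, div_mul_eq_mul_div, div_le_iff₀ (by positivity)]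
        nlinarith [sq_nonneg ((n:ℝ)), Nat.cast_nonneg (α := ℝ) n]

lemma d2p_crude (x : ℝ) (hx : |x| < 1) (l : ℕ) (hl : 1 ≤ l) :
    |d2p l x| ≤ ((l:ℝ)+1)*((l:ℝ)+4) / (Real.sqrt (1-x^2) * (1-x^2)^2) := by
  obtain ⟨hx1, hx2⟩ := abs_lt.mp hx
  have hs : 0 < 1-x^2 := by nlinarith
  have hsq : 0 < Real.sqrt (1-x^2) := Real.sqrt_pos.mpr hs
  have hd := d2p_sharp l hl x hx
  have h1 : Real.sqrt (1-x^2) ≤ Real.sqrt ((l:ℝ)*(1-x^2)) := by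
    apply Real.sqrt_le_sqrt
    have : (1:ℝ) ≤ (l:ℝ) := by exact_mod_cast hl
    nlinarith
  rw [le_div_iff₀ (mul_pos hsq (by positivity : (0:ℝ) < (1-x^2)^2))]
  calc |d2p l x| * (Real.sqrt (1-x^2) * (1-x^2)^2)
      ≤ |d2p l x| * (Real.sqrt ((l:ℝ)*(1-x^2)) * (1-x^2)^2) := by
        apply mul_le_mul_of_nonneg_left _ (abs_nonneg _)
        exact mul_le_mul_of_nonneg_right h1 (by positivity)
    _ = Real.sqrt ((l:ℝ)*(1-x^2)) * (1-x^2)^2 * |d2p l x| := by ring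
    _ ≤ ((l:ℝ)+1)*((l:ℝ)+4) := hd

end Leg

namespace Leg

lemma gsummable (x : ℝ) (hx : |x| < 1) : Summable (fun n : ℕ => cr n * d2p (n+2) x) := by
  apply Summable.of_abs
  apply Summable.of_nonneg_of_le (fun n => abs_nonneg _) (gbound x hx)
  exact sum_aux.mul_left _

lemma gtendsto (x : ℝ) (hx : |x| < 1) :
    Filter.Tendsto (fun n : ℕ => ∑ i ∈ Finset.range (n+1), cr i * d2p (i+2) x)
      Filter.atTop (nhds (1/(1-x))) := by
  obtain ⟨hx1, hx2⟩ := abs_lt.mp hx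
  have h1x : (0:ℝ) < 1 - x := by linarith
  have hs : 0 < 1-x^2 := by nlinarith
  have hsq : 0 < Real.sqrt (1-x^2) := Real.sqrt_pos.mpr hs
  have hA0pos : 0 < Real.sqrt (1-x^2) * (1-x^2)^2 := mul_pos hsq (by positivity)
  set A0 : ℝ := Real.sqrt (1-x^2) * (1-x^2)^2 with hA0
  set en : ℕ → ℝ := fun n =>
    2*(d2p (n+2) x - d2p (n+3) x)/(((n:ℝ)+2)*((n:ℝ)+3)*((n:ℝ)+4)) with hen
  have hSn : ∀ n, (∑ i ∈ Finset.range (n+1), cr i * d2p (i+2) x) = (1 + en n)/(1-x) := by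
    intro n
    have hk := keysum x n
    have hD : (0:ℝ) < ((n:ℝ)+2)*((n:ℝ)+3)*((n:ℝ)+4) := by positivity
    rw [hen]
    field_simp
    linear_combination hk
  have hbound : ∀ n : ℕ, ‖en n‖ ≤ (28/A0)/((n:ℝ)+1) := by
    intro n
    have h2 := d2p_crude x hx (n+2) (by omega)
    have h3 := d2p_crude x hx (n+3) (by omega)
    push_cast at h2 h3
    have hD : (0:ℝ) < ((n:ℝ)+2)*((n:ℝ)+3)*((n:ℝ)+4) := by positivity
    have hn : (0:ℝ) ≤ (n:ℝ) := Nat.cast_nonneg n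
    have hn1 : (0:ℝ) < (n:ℝ)+1 := by positivity
    have A0a : A0 * |d2p (n+2) x| ≤ ((n:ℝ)+3)*((n:ℝ)+6) := by
      rw [le_div_iff₀ hA0pos] at h2
      nlinarith [h2]
    have A0b : A0 * |d2p (n+3) x| ≤ ((n:ℝ)+4)*((n:ℝ)+7) := by
      rw [le_div_iff₀ hA0pos] at h3
      nlinarith [h3]
    have e1 : A0 * |d2p (n+2) x - d2p (n+3) x|
        ≤ ((n:ℝ)+3)*((n:ℝ)+6) + ((n:ℝ)+4)*((n:ℝ)+7) := by
      calc A0 * |d2p (n+2) x - d2p (n+3) x|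
          ≤ A0 * (|d2p (n+2) x| + |d2p (n+3) x|) :=
            mul_le_mul_of_nonneg_left (abs_sub _ _) hA0pos.le
        _ ≤ _ := by nlinarith [A0a, A0b]
    show |en n| ≤ (28/A0)/((n:ℝ)+1)
    rw [hen]
    rw [div_div]
    rw [le_div_iff₀ (by positivity : (0:ℝ) < A0*((n:ℝ)+1))]
    rw [abs_div, abs_of_pos hD, div_mul_eq_mul_div, div_le_iff₀ hD]
    have habs2 : |2*(d2p (n+2) x - d2p (n+3) x)| = 2 * |d2p (n+2) x - d2p (n+3) x| := by
      rw [abs_mul, abs_two]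
    rw [habs2]
    have e2 : 2 * |d2p (n+2) x - d2p (n+3) x| * (A0*((n:ℝ)+1))
        = 2*((n:ℝ)+1) * (A0 * |d2p (n+2) x - d2p (n+3) x|) := by ring
    rw [e2]
    calc 2*((n:ℝ)+1) * (A0 * |d2p (n+2) x - d2p (n+3) x|)
        ≤ 2*((n:ℝ)+1) * (((n:ℝ)+3)*((n:ℝ)+6) + ((n:ℝ)+4)*((n:ℝ)+7)) :=
          mul_le_mul_of_nonneg_left e1 (by positivity)
      _ ≤ 28 * (((n:ℝ)+2)*((n:ℝ)+3)*((n:ℝ)+4)) := by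
          nlinarith [mul_nonneg (mul_nonneg hn hn) hn, mul_nonneg hn hn, hn]
  have htz : Filter.Tendsto (fun n : ℕ => (28/A0)/((n:ℝ)+1)) Filter.atTop (nhds 0) := by
    apply Filter.Tendsto.div_atTop tendsto_const_nhds
    exact Filter.tendsto_atTop_add_const_right _ 1 tendsto_natCast_atTop_atTop
  have htend0 : Filter.Tendsto en Filter.atTop (nhds 0) := squeeze_zero_norm hbound htz
  have hfin : Filter.Tendsto (fun n : ℕ => (1 + en n)/(1-x)) Filter.atTop
      (nhds ((1+0)/(1-x))) := (htend0.const_add 1).div_const _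
  simp only [hSn]
  convert hfin using 2
  norm_num

lemma crfact (n : ℕ) :
    (2 * (2 * ((n+2:ℕ):ℝ) + 1)) * (Nat.factorial ((n+2) - 2) : ℝ)
      / (Nat.factorial ((n+2) + 2) : ℝ) = cr n := by
  have h1 : (n+2) - 2 = n := by omega
  have h2 : (n+2) + 2 = n+4 := by omega
  rw [h1, h2]
  have hfac : (Nat.factorial (n+4) : ℝ)
      = ((n:ℝ)+4)*((n:ℝ)+3)*((n:ℝ)+2)*((n:ℝ)+1)*(Nat.factorial n : ℝ) := by
    rw [show n+4 = n+3+1 from rfl, Nat.factorial_succ,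
      show n+3 = n+2+1 from rfl, Nat.factorial_succ,
      show n+2 = n+1+1 from rfl, Nat.factorial_succ, Nat.factorial_succ]
    push_cast
    ring
  have hfn : (0:ℝ) < (Nat.factorial n : ℝ) := by exact_mod_cast n.factorial_pos
  rw [hfac]
  unfold cr
  rw [div_eq_div_iff (by positivity) (by positivity)]
  push_cast
  ring

end Leg

/-- For `|x| < 1`, the series `Σ_{l=2}^∞ (2(2l+1)(l-2)!/(l+2)!) P_l''(x)` converges
to `1/(1-x)`. -/
theorem legendre_second_derivative_sum (x : ℝ) (hx : |x| < 1) :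
    HasSum (fun l : {l : ℕ // 2 ≤ l} =>
      ((2 * (2 * (l : ℕ) + 1) : ℝ) * (Nat.factorial ((l : ℕ) - 2)) /
        (Nat.factorial ((l : ℕ) + 2))) *
        (derivative (derivative (legendre (l : ℕ)))).eval x)
      (1 / (1 - x)) := by
  classical
  have hsum := Leg.gsummable x hx
  have hT := hsum.hasSum.tendsto_sum_nat
  have hT' : Filter.Tendsto (fun n : ℕ => ∑ i ∈ Finset.range (n+1), Leg.cr i * Leg.d2p (i+2) x)
      Filter.atTop (nhds (∑' n : ℕ, Leg.cr n * Leg.d2p (n+2) x)) :=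
    hT.comp (Filter.tendsto_add_atTop_nat 1)
  have heq : (∑' n : ℕ, Leg.cr n * Leg.d2p (n+2) x) = 1/(1-x) :=
    tendsto_nhds_unique hT' (Leg.gtendsto x hx)
  have hHasSum : HasSum (fun n : ℕ => Leg.cr n * Leg.d2p (n+2) x) (1/(1-x)) :=
    heq ▸ hsum.hasSum
  let e : ℕ ≃ {l : ℕ // 2 ≤ l} :=
    { toFun := fun n => ⟨n+2, by omega⟩
      invFun := fun l => (l : ℕ) - 2
      left_inv := fun n => by simp
      right_inv := fun l => by
        obtain ⟨l, hl⟩ := l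
        ext
        simp
        omega }
  refine (Equiv.hasSum_iff e).mp ?_
  have hcomp : ((fun l : {l : ℕ // 2 ≤ l} =>
      ((2 * (2 * (l : ℕ) + 1) : ℝ) * (Nat.factorial ((l : ℕ) - 2)) /
        (Nat.factorial ((l : ℕ) + 2))) *
        (derivative (derivative (legendre (l : ℕ)))).eval x) ∘ ⇑e)
      = fun n : ℕ => Leg.cr n * Leg.d2p (n+2) x := by
    funext n
    show ((2 * (2 * ((n+2:ℕ):ℝ) + 1)) * (Nat.factorial ((n+2) - 2) : ℝ)
      / (Nat.factorial ((n+2) + 2) : ℝ)) * (derivative (derivative (legendre (n+2)))).eval x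
      = Leg.cr n * Leg.d2p (n+2) x
    rw [Leg.crfact n]
    rfl
  rw [hcomp]
  exact hHasSum
end

section
/- For every natural number l with l ≥ 2, the series of real numbers Σ_{k=0}^∞ ((2l+1)!! / (2l+2k+1)!!) · ((l+2k−2)! / (2^k · k! · (l−2)!)) converges and its sum equals 2·(2l+1)!! / (l+2)!. -/
open Filter Finset Topology Nat
open scoped Nat

/-- `g m k` is the series term with `l = m + 2`, avoiding natural subtraction. -/
noncomputable def gfun (m k : ℕ) : ℝ :=
  ((2 * m + 5)‼ : ℝ) / ((2 * m + 2 * k + 5)‼) *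
    (((m + 2 * k)! : ℝ) / (2 ^ k * (k)! * (m)!))

lemma df_cast_ne (n : ℕ) : ((n‼ : ℕ) : ℝ) ≠ 0 :=
  Nat.cast_ne_zero.mpr (Nat.doubleFactorial_pos n).ne'

lemma fact_cast_ne (n : ℕ) : ((n ! : ℕ) : ℝ) ≠ 0 :=
  Nat.cast_ne_zero.mpr (Nat.factorial_pos n).ne'

lemma gfun_pos (m k : ℕ) : 0 < gfun m k := by
  unfold gfun
  have h1 := Nat.doubleFactorial_pos (2 * m + 5)
  have h2 := Nat.doubleFactorial_pos (2 * m + 2 * k + 5)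
  have h3 := Nat.factorial_pos (m + 2 * k)
  have h4 := Nat.factorial_pos k
  have h5 := Nat.factorial_pos m
  positivity

lemma gfun_nonneg (m k : ℕ) : 0 ≤ gfun m k := (gfun_pos m k).le

lemma g_succ_k (m k : ℕ) :
    gfun m (k + 1) = gfun m k *
      (((m : ℝ) + 2 * k + 2) * ((m : ℝ) + 2 * k + 1)) /
        (2 * ((k : ℝ) + 1) * (2 * (m : ℝ) + 2 * (k : ℝ) + 7)) := by
  unfold gfun
  have h1 : 2 * m + 2 * (k + 1) + 5 = (2 * m + 2 * k + 5) + 2 := by ring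
  have h2 : m + 2 * (k + 1) = ((m + 2 * k) + 1) + 1 := by ring
  rw [h1, h2, Nat.doubleFactorial_add_two (2 * m + 2 * k + 5), Nat.factorial_succ ((m + 2 * k) + 1),
    Nat.factorial_succ (m + 2 * k), Nat.factorial_succ k, pow_succ]
  have n1 := df_cast_ne (2 * m + 2 * k + 5)
  have n2 := fact_cast_ne k
  have n3 := fact_cast_ne m
  have n4 : (2 : ℝ) ^ k ≠ 0 := by positivity
  have n5 : ((2 * m + 2 * k + 5 : ℕ) + 2 : ℝ) ≠ 0 := by positivity
  have n6 : ((k : ℝ) + 1) ≠ 0 := by positivity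
  have n7 : (2 * (m : ℝ) + 2 * (k : ℝ) + 7) ≠ 0 := by positivity
  push_cast
  field_simp
  ring

lemma g_succ_m (m k : ℕ) :
    gfun (m + 1) k = gfun m k *
      ((2 * (m : ℝ) + 7) * ((m : ℝ) + 2 * k + 1)) /
        ((2 * (m : ℝ) + 2 * (k : ℝ) + 7) * ((m : ℝ) + 1)) := by
  unfold gfun
  have h1 : 2 * (m + 1) + 5 = (2 * m + 5) + 2 := by ring
  have h2 : 2 * (m + 1) + 2 * k + 5 = (2 * m + 2 * k + 5) + 2 := by ring
  have h3 : m + 1 + 2 * k = (m + 2 * k) + 1 := by ring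
  rw [h1, h2, h3, Nat.doubleFactorial_add_two (2 * m + 5), Nat.doubleFactorial_add_two (2 * m + 2 * k + 5),
    Nat.factorial_succ (m + 2 * k), Nat.factorial_succ m]
  have n1 := df_cast_ne (2 * m + 2 * k + 5)
  have n2 := df_cast_ne (2 * m + 5)
  have n3 := fact_cast_ne k
  have n4 := fact_cast_ne m
  have n5 := fact_cast_ne (m + 2 * k)
  have n6 : (2 : ℝ) ^ k ≠ 0 := by positivity
  have n7 : (2 * (m : ℝ) + 2 * (k : ℝ) + 7) ≠ 0 := by positivity
  have n8 : ((m : ℝ) + 1) ≠ 0 := by positivity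
  push_cast
  field_simp
  ring

lemma g_zero (k : ℕ) :
    gfun 0 k = 15 / ((2 * (k : ℝ) + 1) * (2 * (k : ℝ) + 3) * (2 * (k : ℝ) + 5)) := by
  induction k with
  | zero =>
      unfold gfun
      norm_num [Nat.doubleFactorial, Nat.factorial]
  | succ k ih =>
      rw [g_succ_k, ih]
      have n1 : (2 * (k : ℝ) + 1) ≠ 0 := by positivity
      have n2 : (2 * (k : ℝ) + 3) ≠ 0 := by positivity
      have n3 : (2 * (k : ℝ) + 5) ≠ 0 := by positivity
      have n4 : (2 * (k : ℝ) + 7) ≠ 0 := by positivity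
      have n5 : ((k : ℝ) + 1) ≠ 0 := by positivity
      push_cast
      field_simp
      ring

/-- Base case: `Σ_k gfun 0 k = 5/4` by telescoping. -/
lemma hasSum_g_zero : HasSum (gfun 0) (5 / 4 : ℝ) := by
  set c : ℕ → ℝ := fun k => 15 / (4 * (2 * (k : ℝ) + 1) * (2 * (k : ℝ) + 3)) with hc
  have hterm : ∀ k, gfun 0 k = c k - c (k + 1) := by
    intro k
    rw [g_zero]
    simp only [hc]
    have n1 : (2 * (k : ℝ) + 1) ≠ 0 := by positivity
    have n2 : (2 * (k : ℝ) + 3) ≠ 0 := by positivity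
    have n3 : (2 * (k : ℝ) + 5) ≠ 0 := by positivity
    push_cast
    field_simp
    ring
  rw [hasSum_iff_tendsto_nat_of_nonneg (fun i => gfun_nonneg 0 i)]
  have hsum : ∀ n, ∑ i ∈ range n, gfun 0 i = c 0 - c n := by
    intro n
    rw [Finset.sum_congr rfl fun i _ => hterm i, Finset.sum_range_sub' c n]
  simp only [hsum]
  have hc0 : c 0 = 5 / 4 := by norm_num [hc]
  have hczero : Tendsto c atTop (𝓝 0) := by
    apply squeeze_zero' (g := fun n : ℕ => 15 / (n : ℝ))
    · filter_upwards with n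
      have : (0:ℝ) < 4 * (2 * (n : ℝ) + 1) * (2 * (n : ℝ) + 3) := by positivity
      simp only [hc]
      positivity
    · filter_upwards [eventually_ge_atTop 1] with n hn
      have hn' : (1 : ℝ) ≤ (n : ℝ) := by exact_mod_cast hn
      simp only [hc]
      apply div_le_div_of_nonneg_left (by norm_num) (by positivity)
      nlinarith
    · exact tendsto_const_div_atTop_nhds_zero_nat 15
  simp only [hc0]
  have h2 : Tendsto (fun n : ℕ => (5 / 4 : ℝ) - c n) atTop (𝓝 (5 / 4 - 0)) :=
    tendsto_const_nhds.sub hczero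
  simpa using h2

/-- Olivier-type lemma: a nonnegative, eventually antitone, summable sequence
satisfies `n * f n → 0`. -/
lemma tendsto_nat_mul_zero {f : ℕ → ℝ} (hpos : ∀ n, 0 ≤ f n) (hsum : Summable f)
    {N : ℕ} (hanti : ∀ n, N ≤ n → f (n + 1) ≤ f n) :
    Tendsto (fun n : ℕ => (n : ℝ) * f n) atTop (𝓝 0) := by
  have hmono : ∀ i j, N ≤ i → i ≤ j → f j ≤ f i := by
    intro i j hNi hij
    induction j, hij using Nat.le_induction with
    | base => exact le_refl _
    | succ j hij ih => exact (hanti j (hNi.trans hij)).trans ih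
  have hbound : ∀ n : ℕ, 2 * N + 2 ≤ n →
      (n : ℝ) * f n ≤ 2 * ∑' k, f (k + n / 2) := by
    intro n hn
    have hN2 : N ≤ n / 2 := by omega
    have h1 : (n - n / 2 : ℕ) * f n ≤ ∑ i ∈ Finset.Ico (n / 2) n, f i := by
      have : ∀ i ∈ Finset.Ico (n / 2) n, f n ≤ f i := by
        intro i hi
        rw [Finset.mem_Ico] at hi
        exact hmono i n (hN2.trans hi.1) hi.2.le
      calc (n - n / 2 : ℕ) * f n = ∑ _i ∈ Finset.Ico (n / 2) n, f n := by
            rw [Finset.sum_const, Nat.card_Ico, nsmul_eq_mul]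
        _ ≤ _ := Finset.sum_le_sum this
    have h2 : ∑ i ∈ Finset.Ico (n / 2) n, f i ≤ ∑' k, f (k + n / 2) := by
      rw [Finset.sum_Ico_eq_sum_range]
      have hs : Summable fun k => f (k + n / 2) := (summable_nat_add_iff (n / 2)).2 hsum
      calc ∑ i ∈ range (n - n / 2), f (n / 2 + i)
          = ∑ i ∈ range (n - n / 2), f (i + n / 2) := by
            refine Finset.sum_congr rfl fun i _ => by rw [add_comm]
        _ ≤ ∑' k, f (k + n / 2) := Summable.sum_le_tsum _ (fun i _ => hpos _) hs
    have h3 : (n : ℝ) ≤ 2 * (n - n / 2 : ℕ) := by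
      have : n ≤ 2 * (n - n / 2) := by omega
      exact_mod_cast this
    calc (n : ℝ) * f n ≤ 2 * (n - n / 2 : ℕ) * f n :=
          mul_le_mul_of_nonneg_right h3 (hpos n)
      _ = 2 * ((n - n / 2 : ℕ) * f n) := by ring
      _ ≤ 2 * ∑ i ∈ Finset.Ico (n / 2) n, f i := by linarith
      _ ≤ 2 * ∑' k, f (k + n / 2) := by linarith
  have hdiv : Tendsto (fun n : ℕ => n / 2) atTop atTop := by
    rw [tendsto_atTop_atTop]
    intro b
    exact ⟨2 * b, fun a ha => by omega⟩
  have htail : Tendsto (fun n : ℕ => 2 * ∑' k, f (k + n / 2)) atTop (𝓝 0) := by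
    have := ((tendsto_sum_nat_add f).comp hdiv).const_mul (2 : ℝ)
    simpa using this
  apply squeeze_zero' ?_ ?_ htail
  · filter_upwards with n
    exact mul_nonneg (Nat.cast_nonneg n) (hpos n)
  · filter_upwards [eventually_ge_atTop (2 * N + 2)] with n hn
    exact hbound n hn

lemma gfun_anti (m k : ℕ) (hk : m * m ≤ k) : gfun m (k + 1) ≤ gfun m k := by
  rw [g_succ_k]
  have hden : (0:ℝ) < 2 * ((k : ℝ) + 1) * (2 * (m : ℝ) + 2 * (k : ℝ) + 7) := by positivity
  rw [mul_div_assoc]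
  have hratio : ((m : ℝ) + 2 * k + 2) * ((m : ℝ) + 2 * k + 1) /
      (2 * ((k : ℝ) + 1) * (2 * (m : ℝ) + 2 * (k : ℝ) + 7)) ≤ 1 := by
    rw [div_le_one hden]
    have hk' : (m : ℝ) * m ≤ (k : ℝ) := by exact_mod_cast hk
    nlinarith [Nat.cast_nonneg (α := ℝ) m, Nat.cast_nonneg (α := ℝ) k]
  calc gfun m k * (((m : ℝ) + 2 * k + 2) * ((m : ℝ) + 2 * k + 1) /
        (2 * ((k : ℝ) + 1) * (2 * (m : ℝ) + 2 * (k : ℝ) + 7)))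
      ≤ gfun m k * 1 := mul_le_mul_of_nonneg_left hratio (gfun_nonneg m k)
    _ = gfun m k := mul_one _

lemma hasSum_g (m : ℕ) :
    HasSum (gfun m) (2 * ((2 * m + 5)‼ : ℝ) / ((m + 4)! : ℝ)) := by
  induction m with
  | zero =>
      have : (2 * ((2 * 0 + 5)‼ : ℕ) : ℝ) / ((0 + 4)! : ℕ) = 5 / 4 := by
        norm_num [Nat.doubleFactorial, Nat.factorial]
      rw [show ((0:ℕ) + 4) = 4 from rfl]
      rw [show (2 * (0:ℕ) + 5) = 5 from rfl]
      have h5 : ((5:ℕ)‼ : ℝ) = 15 := by norm_num [Nat.doubleFactorial]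
      have h4 : ((4:ℕ)! : ℝ) = 24 := by norm_num [Nat.factorial]
      rw [h5, h4]
      norm_num
      exact hasSum_g_zero
  | succ m ih =>
      set S : ℝ := 2 * ((2 * m + 5)‼ : ℝ) / ((m + 4)! : ℝ) with hS
      set A : ℝ := (2 * (m : ℝ) + 7) / ((m : ℝ) + 5) with hA
      set B : ℝ := 2 * (2 * (m : ℝ) + 7) / (((m : ℝ) + 5) * ((m : ℝ) + 1)) with hB
      have key : ∀ k : ℕ, gfun (m + 1) k =
          A * gfun m k + B * ((k : ℝ) * gfun m k - (((k + 1 : ℕ)) : ℝ) * gfun m (k + 1)) := by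
        intro k
        rw [g_succ_m, g_succ_k, hA, hB]
        have n1 : (2 * (m : ℝ) + 2 * (k : ℝ) + 7) ≠ 0 := by positivity
        have n2 : ((m : ℝ) + 1) ≠ 0 := by positivity
        have n3 : ((m : ℝ) + 5) ≠ 0 := by positivity
        have n4 : ((k : ℝ) + 1) ≠ 0 := by positivity
        push_cast
        field_simp
        ring
      have hP : ∀ n : ℕ, ∑ i ∈ range n, gfun (m + 1) i =
          A * (∑ i ∈ range n, gfun m i) - B * ((n : ℝ) * gfun m n) := by
        intro n
        rw [Finset.sum_congr rfl fun i _ => key i, Finset.sum_add_distrib,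
          ← Finset.mul_sum, ← Finset.mul_sum,
          Finset.sum_range_sub' (fun i => (i : ℝ) * gfun m i) n]
        simp only [Nat.cast_zero, zero_mul, zero_sub]
        ring
      have hQ : Tendsto (fun n : ℕ => ∑ i ∈ range n, gfun m i) atTop (𝓝 S) :=
        ih.tendsto_sum_nat
      have hzero : Tendsto (fun n : ℕ => (n : ℝ) * gfun m n) atTop (𝓝 0) :=
        tendsto_nat_mul_zero (gfun_nonneg m) ih.summable
          (N := m * m) (fun n hn => gfun_anti m n hn)
      have hlim : Tendsto (fun n : ℕ => ∑ i ∈ range n, gfun (m + 1) i) atTop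
          (𝓝 (A * S - B * 0)) := by
        simp only [hP]
        exact (hQ.const_mul A).sub (hzero.const_mul B)
      rw [hasSum_iff_tendsto_nat_of_nonneg (fun i => gfun_nonneg (m + 1) i)]
      have e1 : (((2 * (m + 1) + 5)‼ : ℕ) : ℝ) = (2 * (m : ℝ) + 7) * ((2 * m + 5)‼ : ℕ) := by
        rw [show 2 * (m + 1) + 5 = (2 * m + 5) + 2 from by ring, Nat.doubleFactorial_add_two]
        push_cast; ring
      have e2 : ((((m + 1) + 4)! : ℕ) : ℝ) = ((m : ℝ) + 5) * ((m + 4)! : ℕ) := by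
        rw [show (m + 1) + 4 = (m + 4) + 1 from by ring, Nat.factorial_succ]
        push_cast; ring
      have hval : A * S - B * 0 = 2 * ((2 * (m + 1) + 5)‼ : ℝ) / (((m + 1) + 4)! : ℝ) := by
        rw [mul_zero, sub_zero, hA, hS, e1, e2]
        have n1 := fact_cast_ne (m + 4)
        have n2 : ((m : ℝ) + 5) ≠ 0 := by positivity
        field_simp
      rw [← hval]
      exact hlim

/-- For `l ≥ 2`, the series `Σ_{k=0}^∞ ((2l+1)!!/(2l+2k+1)!!) ((l+2k-2)!/(2^k k! (l-2)!))`
converges and its sum equals `2·(2l+1)!!/(l+2)!`. -/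
theorem doubleFactorial_resummation (l : ℕ) (hl : 2 ≤ l) :
    HasSum (fun k : ℕ =>
      ((Nat.doubleFactorial (2 * l + 1) : ℝ) / (Nat.doubleFactorial (2 * l + 2 * k + 1))) *
        ((Nat.factorial (l + 2 * k - 2) : ℝ) /
          (2 ^ k * Nat.factorial k * Nat.factorial (l - 2))))
      (2 * (Nat.doubleFactorial (2 * l + 1) : ℝ) / (Nat.factorial (l + 2))) := by
  obtain ⟨m, rfl⟩ : ∃ m, l = m + 2 := ⟨l - 2, by omega⟩
  have h := hasSum_g m
  have hfun : (fun k : ℕ =>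
      ((Nat.doubleFactorial (2 * (m + 2) + 1) : ℝ) /
        (Nat.doubleFactorial (2 * (m + 2) + 2 * k + 1))) *
        ((Nat.factorial (m + 2 + 2 * k - 2) : ℝ) /
          (2 ^ k * Nat.factorial k * Nat.factorial (m + 2 - 2)))) = gfun m := by
    funext k
    unfold gfun
    rw [show 2 * (m + 2) + 1 = 2 * m + 5 from by ring,
      show 2 * (m + 2) + 2 * k + 1 = 2 * m + 2 * k + 5 from by ring,
      show m + 2 + 2 * k - 2 = m + 2 * k from by omega,
      show m + 2 - 2 = m from by omega]
  rw [hfun, show 2 * (m + 2) + 1 = 2 * m + 5 from by ring,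
    show m + 2 + 2 = m + 4 from by ring]
  exact h
end
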